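/- Let W be the principal Lambert W function, g(r) = e^{-r/√2}(sin(r/√2) + cos(r/√2)), and λ₁(r) = r^{-2}·[W(e^{g(r)}) − g(r)]² for r > 0. Then λ₁ extends continuously to r = 0 with λ₁(0) = 0, and moreover λ₁(r) = r²/16 + O(r³) as r → 0⁺. -/

import Mathlib

/-!
Near `0`, `g(r) = 1 - r²/2 + O(r³)` by the Taylor polynomials of `exp`, `sin` and `cos`.
The value `h = W(e^g)` is the positive solution of `h + log h = g`. Since `h - 1` and `log h`
have the same sign, `|h - 1| ≤ |g - 1|`, and `0 ≤ h - 1 - log h ≤ 2 (h - 1)²` then gives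
`h - g = (1 - g)/2 + O((1 - g)²) = r²/4 + O(r³)`. Squaring and dividing by `r²` yields
`|λ₁(r) - r²/16| ≤ 2r³` for `0 < r < 1/6`, which also gives `λ₁(r) → 0`.
-/

open Real Filter

noncomputable def g1 (r : ℝ) : ℝ :=
  Real.exp (-(r / Real.sqrt 2)) * (Real.sin (r / Real.sqrt 2) + Real.cos (r / Real.sqrt 2))

lemma abs_exp_neg_sub_le {s : ℝ} (hs : |s| ≤ 1) :
    |exp (-s) - (1 - s + s ^ 2 / 2)| ≤ 2 / 9 * |s| ^ 3 := by
  have h := exp_bound (x := -s) (by rwa [abs_neg]) (n := 3) (by norm_num)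
  norm_num [Finset.sum_range_succ, Nat.factorial] at h
  rw [sub_eq_add_neg 1 s]
  linarith

lemma abs_sin_add_cos_sub_le {s : ℝ} (hs : |s| ≤ 1) :
    |sin s + cos s - (1 + s - s ^ 2 / 2)| ≤ |s| ^ 3 / 4 := by
  have hsin := sin_bound hs
  have hcos := cos_bound hs
  have h5 : |s| ^ 5 ≤ |s| ^ 3 := pow_le_pow_of_le_one (abs_nonneg s) hs (by norm_num)
  have h4 : |s| ^ 4 ≤ |s| ^ 3 := pow_le_pow_of_le_one (abs_nonneg s) hs (by norm_num)
  have hsplit : sin s + cos s - (1 + s - s ^ 2 / 2)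
      = (sin s - (s - s ^ 3 / 6)) + (cos s - (1 - s ^ 2 / 2)) - s ^ 3 / 6 := by ring
  have htri := abs_add_le (sin s - (s - s ^ 3 / 6)) (cos s - (1 - s ^ 2 / 2))
  have hcube : |s ^ 3 / 6| = |s| ^ 3 / 6 := by rw [abs_div, abs_pow]; norm_num
  calc |sin s + cos s - (1 + s - s ^ 2 / 2)|
      ≤ |(sin s - (s - s ^ 3 / 6)) + (cos s - (1 - s ^ 2 / 2))| + |s ^ 3 / 6| :=
        hsplit ▸ abs_sub _ _
    _ ≤ |s| ^ 3 / 4 := by linarith [pow_nonneg (abs_nonneg s) 3]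

lemma abs_exp_neg_mul_sin_add_cos_sub_le {s : ℝ} (hs : |s| ≤ 1) :
    |exp (-s) * (sin s + cos s) - (1 - s ^ 2)| ≤ 3 * |s| ^ 3 := by
  have hE := abs_exp_neg_sub_le hs
  have hS := abs_sin_add_cos_sub_le hs
  have hS2 : |sin s + cos s| ≤ 2 :=
    (abs_add_le _ _).trans (by linarith [abs_sin_le_one s, abs_cos_le_one s])
  have hP : |1 - s + s ^ 2 / 2| ≤ 5 / 2 := by
    obtain ⟨h₁, h₂⟩ := abs_le.mp hs
    rw [abs_le]; constructor <;> nlinarith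
  have hR : |s ^ 3 - s ^ 4 / 4| ≤ 5 / 4 * |s| ^ 3 := by
    have h4 : |s| ^ 4 ≤ |s| ^ 3 := pow_le_pow_of_le_one (abs_nonneg s) hs (by norm_num)
    calc |s ^ 3 - s ^ 4 / 4| ≤ |s ^ 3| + |s ^ 4 / 4| := abs_sub _ _
      _ = |s| ^ 3 + |s| ^ 4 / 4 := by rw [abs_div, abs_pow, abs_pow]; norm_num
      _ ≤ 5 / 4 * |s| ^ 3 := by linarith
  -- `(1 - s + s²/2)(1 + s - s²/2) = 1 - s² + s³ - s⁴/4`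
  have hsplit : exp (-s) * (sin s + cos s) - (1 - s ^ 2)
      = (exp (-s) - (1 - s + s ^ 2 / 2)) * (sin s + cos s)
        + (1 - s + s ^ 2 / 2) * (sin s + cos s - (1 + s - s ^ 2 / 2))
        + (s ^ 3 - s ^ 4 / 4) := by ring
  have h₁ : |(exp (-s) - (1 - s + s ^ 2 / 2)) * (sin s + cos s)| ≤ 2 / 9 * |s| ^ 3 * 2 := by
    rw [abs_mul]; gcongr
  have h₂ : |(1 - s + s ^ 2 / 2) * (sin s + cos s - (1 + s - s ^ 2 / 2))|
      ≤ 5 / 2 * (|s| ^ 3 / 4) := by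
    rw [abs_mul]; gcongr
  rw [hsplit]
  calc _ ≤ _ := abs_add_three _ _ _
    _ ≤ 3 * |s| ^ 3 := by linarith [pow_nonneg (abs_nonneg s) 3]

lemma abs_g1_sub_le {r : ℝ} (hr : |r| ≤ 1) : |g1 r - (1 - r ^ 2 / 2)| ≤ 3 * |r| ^ 3 := by
  have hs : |r / √2| ≤ |r| := by
    rw [abs_div, abs_of_pos (by positivity : (0 : ℝ) < √2)]
    exact div_le_self (abs_nonneg r) one_lt_sqrt_two.le
  have hsq : (r / √2) ^ 2 = r ^ 2 / 2 := by rw [div_pow, sq_sqrt zero_le_two]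
  calc |g1 r - (1 - r ^ 2 / 2)| ≤ 3 * |r / √2| ^ 3 := by
        rw [← hsq]; exact abs_exp_neg_mul_sin_add_cos_sub_le (hs.trans hr)
    _ ≤ 3 * |r| ^ 3 := by gcongr

lemma abs_sub_one_le_of_add_log_eq {h g : ℝ} (hh : 0 < h) (hg : h + log h = g) :
    |h - 1| ≤ |g - 1| := by
  rcases le_total h 1 with h1 | h1
  · have := log_nonpos hh.le h1
    rw [abs_of_nonpos (by linarith), abs_of_nonpos (by linarith)]; linarith
  · have := log_nonneg h1
    rw [abs_of_nonneg (by linarith), abs_of_nonneg (by linarith)]; linarith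

lemma abs_sub_sub_half_le_of_add_log_eq {h g : ℝ} (hh : 0 < h) (hg : h + log h = g)
    (hg1 : |g - 1| ≤ 1 / 2) : |h - g - (1 - g) / 2| ≤ (1 - g) ^ 2 := by
  have hu : |h - 1| ≤ |g - 1| := abs_sub_one_le_of_add_log_eq hh hg
  have hh2 : 1 / 2 ≤ h := by linarith [neg_abs_le (h - 1)]
  have hu2 : (h - 1) ^ 2 ≤ (1 - g) ^ 2 := by
    rw [← sq_abs, ← sq_abs (1 - g), abs_sub_comm 1 g]; gcongr
  -- `0 ≤ h - 1 - log h ≤ (h - 1)² / h`, and `h - g - (1 - g) / 2 = (h - 1 - log h) / 2`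
  have hlo := log_le_sub_one_of_pos hh
  have hhi : h - 1 - log h ≤ 2 * (h - 1) ^ 2 := by
    have := one_sub_inv_le_log_of_pos hh
    have hinv : h - 2 + h⁻¹ = (h - 1) ^ 2 / h := by field_simp; ring
    have : (h - 1) ^ 2 / h ≤ 2 * (h - 1) ^ 2 := by
      rw [div_le_iff₀ hh]; nlinarith [sq_nonneg (h - 1)]
    linarith
  rw [abs_le]; constructor <;> linarith

lemma abs_sq_sub_sq_le {α : Type*} [CommRing α] [LinearOrder α] [IsStrictOrderedRing α]
    (x y : α) : |x ^ 2 - y ^ 2| ≤ |x - y| * (|x - y| + 2 * |y|) := by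
  have h : x ^ 2 - y ^ 2 = (x - y) * ((x - y) + 2 * y) := by ring
  rw [h, abs_mul]
  gcongr
  exact (abs_add_le _ _).trans (by rw [abs_mul, abs_two])

lemma abs_sub_g1_sq_div_sq_sub_le {r h : ℝ} (hr0 : r ≠ 0) (hr : |r| ≤ 1 / 6) (hh : 0 < h)
    (hlog : h + log h = g1 r) :
    |(h - g1 r) ^ 2 / r ^ 2 - r ^ 2 / 16| ≤ 2 * |r| ^ 3 := by
  have hg := abs_g1_sub_le (hr.trans (by norm_num))
  have ha0 : 0 < |r| := abs_pos.mpr hr0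
  rw [← sq_abs r] at hg ⊢
  generalize |r| = a at *
  set D := h - g1 r
  have ha3 : a ^ 3 ≤ a ^ 2 / 6 := by nlinarith
  have hε : |1 - g1 r| ≤ a ^ 2 := by
    rw [abs_le] at hg ⊢; constructor <;> nlinarith
  have hD := abs_sub_sub_half_le_of_add_log_eq hh hlog
    (by rw [abs_sub_comm]; nlinarith)
  have hD' : |D - a ^ 2 / 4| ≤ 2 * a ^ 3 := by
    have hε2 : (1 - g1 r) ^ 2 ≤ a ^ 3 / 6 := by
      rw [← sq_abs]; nlinarith [abs_nonneg (1 - g1 r)]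
    rw [abs_le] at hg hD ⊢; constructor <;> nlinarith
  have hsq : |D ^ 2 - (a ^ 2 / 4) ^ 2| ≤ 2 * a ^ 3 * a ^ 2 :=
    calc _ ≤ |D - a ^ 2 / 4| * (|D - a ^ 2 / 4| + 2 * |a ^ 2 / 4|) := abs_sq_sub_sq_le _ _
      _ ≤ 2 * a ^ 3 * (2 * a ^ 3 + 2 * (a ^ 2 / 4)) := by
          rw [abs_of_nonneg (by positivity : 0 ≤ a ^ 2 / 4)]; gcongr
      _ ≤ 2 * a ^ 3 * a ^ 2 := by gcongr; nlinarith
  have hdiv : D ^ 2 / a ^ 2 - a ^ 2 / 16 = (D ^ 2 - (a ^ 2 / 4) ^ 2) / a ^ 2 := by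
    field_simp; ring
  rw [hdiv, abs_div, abs_of_pos (pow_pos ha0 2), div_le_iff₀ (pow_pos ha0 2)]
  exact hsq

lemma add_log_eq_of_mul_exp_eq_exp {w y : ℝ} (hw : 0 < w) (h : w * exp w = exp y) :
    w + log w = y := by
  have := congrArg log h
  rwa [log_mul hw.ne' (exp_ne_zero w), log_exp, log_exp, add_comm] at this

/-- With `λ₁(r) = r^{-2}[W(e^{g(r)}) − g(r)]²`, `λ₁` extends continuously to `0` with
value `0`, and `λ₁(r) = r²/16 + O(r³)` as `r → 0⁺`.
`W` is the principal Lambert function, characterized on `(0,∞)` by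
`W(x) > 0` and `W(x)e^{W(x)} = x`. -/
theorem lambda1_asymptotics_zero
    (W : ℝ → ℝ) (hW : ∀ x : ℝ, 0 < x → 0 < W x ∧ W x * Real.exp (W x) = x) :
    Tendsto (fun r : ℝ => (W (Real.exp (g1 r)) - g1 r) ^ 2 / r ^ 2)
      (nhdsWithin 0 (Set.Ioi 0)) (nhds 0) ∧
    ∃ C > (0:ℝ), ∃ δ > (0:ℝ), ∀ r : ℝ, 0 < r → r < δ →
      |(W (Real.exp (g1 r)) - g1 r) ^ 2 / r ^ 2 - r ^ 2 / 16| ≤ C * r ^ 3 := by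
  have hbound : ∀ r : ℝ, 0 < r → r < 1 / 6 →
      |(W (exp (g1 r)) - g1 r) ^ 2 / r ^ 2 - r ^ 2 / 16| ≤ 2 * r ^ 3 := by
    intro r hr hr6
    obtain ⟨hpos, heq⟩ := hW _ (exp_pos (g1 r))
    have hr' : |r| = r := abs_of_pos hr
    simpa only [hr'] using abs_sub_g1_sq_div_sq_sub_le hr.ne' (hr'.symm ▸ hr6.le) hpos
      (add_log_eq_of_mul_exp_eq_exp hpos heq)
  refine ⟨?_, 2, two_pos, 1 / 6, by norm_num, hbound⟩
  have hdiff : Tendsto (fun r : ℝ => (W (exp (g1 r)) - g1 r) ^ 2 / r ^ 2 - r ^ 2 / 16)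
      (nhdsWithin 0 (Set.Ioi 0)) (nhds 0) := by
    refine squeeze_zero_norm' (a := fun r : ℝ => 2 * r ^ 3) ?_ ?_
    · filter_upwards [Ioo_mem_nhdsGT (by norm_num : (0 : ℝ) < 1 / 6)] with r ⟨hr, hr6⟩
      exact hbound r hr hr6
    · exact tendsto_nhdsWithin_of_tendsto_nhds
        (((continuous_pow 3).const_mul 2).tendsto' 0 0 (by norm_num))
  have hmain : Tendsto (fun r : ℝ => r ^ 2 / 16) (nhdsWithin 0 (Set.Ioi 0)) (nhds 0) :=
    tendsto_nhdsWithin_of_tendsto_nhds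
      (((continuous_pow 2).div_const 16).tendsto' 0 0 (by norm_num))
  simpa only [sub_add_cancel, add_zero] using hdiff.add hmain
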